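/- Let A, B, and I be categories, let F : A ⥤ B be a functor, and let a retraction datum (D, D̂, ε, μ) on I in B be given. Assume: (i) A has colimits of chains indexed by the poset ℕ; (ii) B has binary products; (iii) F preserves colimits of chains indexed by ℕ; (iv) F is projectable. Let D̃ : I × ℕ ⥤ B be the unfolding of the retraction datum, i.e. the functor with D̃(X, n) = D̂^{n+1}(X) and D̃(f, m → n) = σ^Y_n ∘ ⋯ ∘ σ^Y_{m+1} ∘ D̂^{m+1}(f) for f : X → Y and m ≤ n. If there exist a functor E : I × ℕ ⥤ A and a natural isomorphism from the composite of E with F to D̃, then there exist a functor R : I ⥤ A and a natural isomorphism from the composite of R with F to D. -/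

import Mathlib

open CategoryTheory CategoryTheory.Limits

universe v₁ v₂ v₃ u₁ u₂ u₃

variable {I : Type u₁} [Category.{v₁} I] {B : Type u₂} [Category.{v₂} B]

noncomputable section

variable [HasBinaryProducts B] (Dh : I ⥤ B)

/-- `powD Dh X n` is the object `D̂^{n+1}(X)`: thus `powD Dh X 0 = D̂(X)` and
`powD Dh X (n+1) = D̂(X) ⨯ powD Dh X n`.  (Indices are shifted by one: the paper's
`D̂^n(X)`, `n ≥ 1`, is `powD Dh X (n-1)`.) -/
def powD (X : I) : ℕ → B
  | 0 => Dh.obj X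
  | n + 1 => Dh.obj X ⨯ powD X n

/-- `alphaD Dh X n` is `α^X_{n+1} : D̂^{n+1}(X) ⟶ D̂(X)`; `α^X_1` is the identity, and
`α^X_{n+2}` is the first product projection. -/
def alphaD (X : I) : ∀ n : ℕ, powD Dh X n ⟶ Dh.obj X
  | 0 => 𝟙 (Dh.obj X)
  | _ + 1 => prod.fst

/-- `piD Dh X n` is `π^X_{n+2} : D̂^{n+2}(X) ⟶ D̂^{n+1}(X)`, the second product projection. -/
def piD (X : I) (n : ℕ) : powD Dh X (n + 1) ⟶ powD Dh X n :=
  prod.snd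

/-- `powMapD Dh f n` is `D̂^{n+1}(f) : D̂^{n+1}(X) ⟶ D̂^{n+1}(Y)`, i.e. `D̂(f)` for `n = 0`
and the product morphism `D̂(f) ⨯ D̂^{n+1}(f)` afterwards. -/
def powMapD {X Y : I} (f : X ⟶ Y) : ∀ n : ℕ, powD Dh X n ⟶ powD Dh Y n
  | 0 => Dh.map f
  | n + 1 => prod.map (Dh.map f) (powMapD f n)

variable (D : I ⥤ B) (ε : D ⟶ Dh) (μ : Dh ⟶ D)

/-- `rhoD Dh D ε μ X` is `ρ_X = ε_X ∘ μ_X : D̂(X) ⟶ D̂(X)`. -/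
def rhoD (X : I) : Dh.obj X ⟶ Dh.obj X := μ.app X ≫ ε.app X

/-- `sigmaD Dh D ε μ X n` is `σ^X_{n+1} : D̂^{n+1}(X) ⟶ D̂^{n+2}(X)`, the pairing
`⟨ρ_X ∘ α^X_{n+1}, id⟩`. -/
def sigmaD (X : I) (n : ℕ) : powD Dh X n ⟶ powD Dh X (n + 1) :=
  prod.lift (alphaD Dh X n ≫ rhoD Dh D ε μ X) (𝟙 (powD Dh X n))

end

noncomputable section

variable [HasBinaryProducts B] (Dh D : I ⥤ B) (ε : D ⟶ Dh) (μ : Dh ⟶ D)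

/-- The composite `σ^X_{m+k} ∘ ⋯ ∘ σ^X_{m+2} ∘ σ^X_{m+1} : D̂^{m+1}(X) ⟶ D̂^{m+k+1}(X)`
(the identity when `k = 0`). -/
def sigmaChainD (X : I) (m : ℕ) : ∀ k : ℕ, powD Dh X m ⟶ powD Dh X (m + k)
  | 0 => 𝟙 _
  | k + 1 => sigmaChainD X m k ≫ sigmaD Dh D ε μ X (m + k)

end

/-- A morphism `f : P ⟶ Q` is a *projection* if there are an object `Q'` and a morphism
`f' : P ⟶ Q'` exhibiting `P` as a binary product of `Q` and `Q'` with projections `f`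
and `f'`. -/
def IsProjection {C : Type u₃} [Category.{v₃} C] {P Q : C} (f : P ⟶ Q) : Prop :=
  ∃ (Q' : C) (f' : P ⟶ Q'), Nonempty (IsLimit (BinaryFan.mk f f'))

/-- `ProjWitness F φ a e` says that `(a, e)` is a *projectability witness* for
`(φ, X, Bo)` with respect to `F`. -/
structure ProjWitness {A : Type u₃} [Category.{v₃} A] {B' : Type u₂} [Category.{v₂} B']
    (F : A ⥤ B') {X : A} {Bo : B'} (φ : F.obj X ⟶ Bo) {Xb : A}
    (a : X ⟶ Xb) (e : F.obj Xb ⟶ Bo) : Prop where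
  epi : Epi a
  iso : IsIso e
  fac : φ = F.map a ≫ e
  lift : ∀ {Z : A} (f : X ⟶ Z) (η : F.obj Xb ⟶ F.obj Z),
    F.map f = F.map a ≫ η → ∃ g : Xb ⟶ Z, f = a ≫ g ∧ η = F.map g

/-- The functor `F` is *projectable* if every triple `(φ, X, Bo)` with
`φ : F(X) ⟶ Bo` a projection admits a projectability witness. -/
def Projectable {A : Type u₃} [Category.{v₃} A] {B' : Type u₂} [Category.{v₂} B']
    (F : A ⥤ B') : Prop :=
  ∀ ⦃X : A⦄ ⦃Bo : B'⦄ (φ : F.obj X ⟶ Bo), IsProjection φ →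
    ∃ (Xb : A) (a : X ⟶ Xb) (e : F.obj Xb ⟶ Bo), ProjWitness F φ a e


/-! Projectability, applied to the projection of `F(E(X, n+1)) ≅ D̂(X) ⨯ D̂^{n+1}(X)` onto its
first factor, gives quotients `E(X, n+1) ↠ R_n(X)` with `F(R_n(X)) ≅ D̂(X)`. The transition maps
of `D̃` act on that first factor by `D̂(f) ≫ ρ`, so they descend to maps `R_n(X) → R_{n+1}(Y)`,
and each `R_•(X)` becomes a chain whose image under `F` is `D̂(X) --ρ--> D̂(X) --ρ--> ⋯`.
Since `ρ = μ ≫ ε` with `ε ≫ μ = 𝟙`, the colimit of that chain is `D(X)`; as `F` preserves it,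
`R(X) = colim R_•(X)` lifts `D`. -/

open Category

namespace CategoryTheory.Limits

variable {C : Type*} [Category C]

@[simps! ι_app]
abbrev Cocone.ofSequence {G : ℕ ⥤ C} {Q : C} (ι : ∀ n, G.obj n ⟶ Q)
    (hι : ∀ n, G.map (homOfLE (n.le_add_right 1)) ≫ ι (n + 1) = ι n) : Cocone G where
  pt := Q
  ι := NatTrans.ofSequence (G := (Functor.const ℕ).obj Q) ι (fun n => by simpa using hι n)

section Retract

variable {G : ℕ ⥤ C} {Q : C} (v : ∀ n, G.obj n ⟶ Q) (w : ∀ n, Q ⟶ G.obj n)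
  (hwv : ∀ n, w n ≫ v n = 𝟙 Q)
  (hG : ∀ n, G.map (homOfLE (n.le_add_right 1)) = v n ≫ w (n + 1))

abbrev retractCocone : Cocone G :=
  Cocone.ofSequence v fun n => by rw [hG, assoc, hwv, comp_id]

include hwv hG in
lemma retract_comp_ι_eq (s : Cocone G) (n : ℕ) : w n ≫ s.ι.app n = w 0 ≫ s.ι.app 0 := by
  induction n with
  | zero => rfl
  | succ n ih => rw [← ih, ← s.w (homOfLE (n.le_add_right 1)), hG, assoc, reassoc_of% (hwv n)]

def isColimitRetractCocone : IsColimit (retractCocone v w hwv hG) where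
  desc s := w 0 ≫ s.ι.app 0
  fac s n := calc
    _ = v n ≫ w (n + 1) ≫ s.ι.app (n + 1) := by rw [retract_comp_ι_eq v w hwv hG s (n + 1)]; rfl
    _ = s.ι.app n := by rw [← reassoc_of% hG, s.w]
  uniq s m hm := calc
    m = (w 0 ≫ v 0) ≫ m := by rw [hwv, id_comp]
    _ = w 0 ≫ s.ι.app 0 := by rw [assoc]; exact congrArg _ (hm 0)

end Retract

end CategoryTheory.Limits

structure SuccDiagram (I A : Type*) [Category I] [Category A] where
  obj : I → ℕ → A
  map {X Y : I} : (X ⟶ Y) → ∀ n, obj X n ⟶ obj Y (n + 1)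
  map_comp_map {X Y Z : I} (f : X ⟶ Y) (g : Y ⟶ Z) (n : ℕ) :
    map f n ≫ map g (n + 1) = map (f ≫ g) n ≫ map (𝟙 Z) (n + 1)

namespace SuccDiagram

noncomputable section

variable {A : Type*} [Category A] (S : SuccDiagram I A)

-- Reducible, with `obj` given explicitly, so that `(S.chain X).obj n` is reducibly `S.obj X n`
-- and rewriting with lemmas about `S.map` works on morphisms of the chain.
abbrev chain (X : I) : ℕ ⥤ A where
  obj := S.obj X
  __ := Functor.ofSequence (S.map (𝟙 X))

@[simp]
lemma chain_map_succ (X : I) (n : ℕ) :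
    (S.chain X).map (homOfLE (n.le_add_right 1)) = S.map (𝟙 X) n :=
  Functor.ofSequence_map_homOfLE_succ _ n

variable [HasColimitsOfShape ℕ A]

@[simp]
lemma map_id_comp_ι (X : I) (n : ℕ) :
    S.map (𝟙 X) n ≫ colimit.ι (S.chain X) (n + 1) = colimit.ι (S.chain X) n := by
  rw [← chain_map_succ]
  exact colimit.w _ _

def coconeOfMap {X Y : I} (f : X ⟶ Y) : Cocone (S.chain X) :=
  Cocone.ofSequence (fun n => S.map f n ≫ colimit.ι (S.chain Y) (n + 1)) fun n => by
    simp [reassoc_of% S.map_comp_map]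

abbrev colim : I ⥤ A where
  obj X := colimit (S.chain X)
  map f := colimit.desc _ (S.coconeOfMap f)
  map_id X := colimit.hom_ext fun n => by simp [coconeOfMap]
  map_comp f g := colimit.hom_ext fun n => by simp [coconeOfMap, reassoc_of% S.map_comp_map]

lemma ι_colim_map {X Y : I} (f : X ⟶ Y) (n : ℕ) :
    colimit.ι (S.chain X) n ≫ S.colim.map f = S.map f n ≫ colimit.ι (S.chain Y) (n + 1) :=
  colimit.ι_desc _ _

variable (F : A ⥤ B) [PreservesColimitsOfShape ℕ F] {D Dh : I ⥤ B} {ε : D ⟶ Dh} {μ : Dh ⟶ D}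
  (hretr : ∀ X : I, ε.app X ≫ μ.app X = 𝟙 (D.obj X)) (u : ∀ X n, F.obj (S.obj X n) ≅ Dh.obj X)
  (hu : ∀ {X Y : I} (f : X ⟶ Y) (n : ℕ),
    F.map (S.map f n) = (u X n).hom ≫ Dh.map f ≫ rhoD Dh D ε μ Y ≫ (u Y (n + 1)).inv)

def isColimitRetractCoconeOfChain (X : I) :
    IsColimit (retractCocone (G := S.chain X ⋙ F) (fun n => (u X n).hom ≫ μ.app X)
      (fun n => ε.app X ≫ (u X n).inv) (by simp [hretr]) (by simp [hu, rhoD])) :=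
  isColimitRetractCocone ..

def colimCompIsoApp (X : I) : F.obj (S.colim.obj X) ≅ D.obj X :=
  (isColimitOfPreserves F (colimit.isColimit (S.chain X))).coconePointUniqueUpToIso
    (S.isColimitRetractCoconeOfChain F hretr u hu X)

lemma map_ι_colimCompIsoApp_hom (X : I) (n : ℕ) :
    F.map (colimit.ι (S.chain X) n) ≫ (S.colimCompIsoApp F hretr u hu X).hom =
      (u X n).hom ≫ μ.app X :=
  (isColimitOfPreserves F (colimit.isColimit _)).comp_coconePointUniqueUpToIso_hom
    (S.isColimitRetractCoconeOfChain F hretr u hu X) n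

def colimCompIso : S.colim ⋙ F ≅ D :=
  NatIso.ofComponents (S.colimCompIsoApp F hretr u hu) fun {X Y} f =>
    (isColimitOfPreserves F (colimit.isColimit (S.chain X))).hom_ext fun n => by
      change F.map (colimit.ι _ n) ≫ F.map (S.colim.map f) ≫
          (S.colimCompIsoApp F hretr u hu Y).hom =
        F.map (colimit.ι _ n) ≫ (S.colimCompIsoApp F hretr u hu X).hom ≫ D.map f
      rw [← F.map_comp_assoc, ι_colim_map, F.map_comp_assoc, map_ι_colimCompIsoApp_hom,
        reassoc_of% map_ι_colimCompIsoApp_hom, hu]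
      simp [rhoD, reassoc_of% hretr]

end

end SuccDiagram

lemma isProjection_hom_comp_fst {C : Type*} [Category C] {W P Q : C} [HasBinaryProduct P Q]
    (e : W ≅ P ⨯ Q) : IsProjection (e.hom ≫ prod.fst) :=
  ⟨Q, e.hom ≫ prod.snd, ⟨(prodIsProd P Q).ofIsoLimit (BinaryFan.ext e.symm (by simp) (by simp))⟩⟩

section Projectable

variable {A : Type*} [Category A] {F : A ⥤ B} {E : I × ℕ ⥤ A} {P : I → B}
  {τ : ∀ {X Y : I}, (X ⟶ Y) → (P X ⟶ P Y)}

lemma map_comp_map_of_epi {C : I → ℕ → A} (a : ∀ X n, E.obj (X, n + 1) ⟶ C X n)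
    [∀ X n, Epi (a X n)] (m : ∀ {X Y : I}, (X ⟶ Y) → ∀ n, C X n ⟶ C Y (n + 1))
    (hm : ∀ {X Y : I} (f : X ⟶ Y) (n : ℕ),
      E.map ((f, homOfLE (Nat.le_add_right (n + 1) 1)) : (X, n + 1) ⟶ (Y, n + 1 + 1)) ≫
        a Y (n + 1) = a X n ≫ m f n)
    {X Y Z : I} (f : X ⟶ Y) (g : Y ⟶ Z) (n : ℕ) :
    m f n ≫ m g (n + 1) = m (f ≫ g) n ≫ m (𝟙 Z) (n + 1) := by
  rw [← cancel_epi (a X n), ← reassoc_of% hm, ← hm, ← reassoc_of% hm, ← hm,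
    ← E.map_comp_assoc, ← E.map_comp_assoc]
  congr 2
  exact Prod.ext (by simp) (Subsingleton.elim _ _)

theorem exists_succDiagram_of_projectable (hproj : Projectable F)
    (p : ∀ X n, F.obj (E.obj (X, n + 1)) ⟶ P X) (hp : ∀ X n, IsProjection (p X n))
    (hpτ : ∀ {X Y : I} (f : X ⟶ Y) (n : ℕ),
      F.map (E.map ((f, homOfLE (Nat.le_add_right (n + 1) 1)) : (X, n + 1) ⟶ (Y, n + 1 + 1))) ≫
        p Y (n + 1) = p X n ≫ τ f) :
    ∃ (S : SuccDiagram I A) (u : ∀ X n, F.obj (S.obj X n) ≅ P X),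
      ∀ {X Y : I} (f : X ⟶ Y) (n : ℕ),
        F.map (S.map f n) = (u X n).hom ≫ τ f ≫ (u Y (n + 1)).inv := by
  choose C a e hw using fun X n => hproj (p X n) (hp X n)
  have := fun X n => (hw X n).epi
  have := fun X n => (hw X n).iso
  have hlift : ∀ {X Y : I} (f : X ⟶ Y) (n : ℕ), ∃ m : C X n ⟶ C Y (n + 1),
      E.map ((f, homOfLE (Nat.le_add_right (n + 1) 1)) : (X, n + 1) ⟶ (Y, n + 1 + 1)) ≫
        a Y (n + 1) = a X n ≫ m ∧ e X n ≫ τ f ≫ inv (e Y (n + 1)) = F.map m := by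
    intro X Y f n
    refine (hw X n).lift _ _ ?_
    rw [F.map_comp, (IsIso.eq_comp_inv _).mpr (hw Y (n + 1)).fac.symm, reassoc_of% hpτ,
      (hw X n).fac, assoc]
  choose m hma hmF using @hlift
  refine ⟨⟨C, fun f n => m f n, map_comp_map_of_epi a (fun f n => m f n) hma⟩,
    fun X n => asIso (e X n), fun f n => ?_⟩
  simp [← hmF]

end Projectable

section Unfolding

variable [HasBinaryProducts B] {D Dh : I ⥤ B} {ε : D ⟶ Dh} {μ : Dh ⟶ D}

lemma powMapD_alphaD {X Y : I} (f : X ⟶ Y) (n : ℕ) :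
    powMapD Dh f n ≫ alphaD Dh Y n = alphaD Dh X n ≫ Dh.map f := by
  cases n with
  | zero => exact (comp_id _).trans (id_comp _).symm
  | succ n => exact prod.map_fst _ _

lemma sigmaD_alphaD (X : I) (n : ℕ) :
    sigmaD Dh D ε μ X n ≫ alphaD Dh X (n + 1) = alphaD Dh X n ≫ rhoD Dh D ε μ X :=
  prod.lift_fst _ _

lemma map_succ_comp_alphaD {Dt : I × ℕ ⥤ B}
    (hobj : ∀ (X : I) (n : ℕ), Dt.obj (X, n) = powD Dh X n)
    (hmap : ∀ {X Y : I} (f : X ⟶ Y) (m k : ℕ),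
      Dt.map ((f, homOfLE (Nat.le_add_right m k)) : (X, m) ⟶ (Y, m + k)) =
        eqToHom (hobj X m) ≫ powMapD Dh f m ≫ sigmaChainD Dh D ε μ Y m k ≫
          eqToHom (hobj Y (m + k)).symm)
    {X Y : I} (f : X ⟶ Y) (n : ℕ) :
    Dt.map ((f, homOfLE (Nat.le_add_right n 1)) : (X, n) ⟶ (Y, n + 1)) ≫
        eqToHom (hobj Y (n + 1)) ≫ alphaD Dh Y (n + 1) =
      eqToHom (hobj X n) ≫ alphaD Dh X n ≫ Dh.map f ≫ rhoD Dh D ε μ Y := by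
  simp [hmap f n 1, sigmaChainD, sigmaD_alphaD, reassoc_of% powMapD_alphaD]

end Unfolding

/-- (Theorem `T:Main`.)  Let `F : A ⥤ B` and let `(D, D̂, ε, μ)` be a
retraction datum on `I` in `B`.  Assume `A` has colimits of `ℕ`-indexed chains, `B` has
binary products, `F` preserves colimits of `ℕ`-indexed chains, and `F` is projectable.
Let `D̃ : I × ℕ ⥤ B` be the unfolding of the retraction datum, i.e. the functor with
`D̃(X, n) = D̂^{n+1}(X)` and `D̃(f, m → m+k) = σ^Y_{m+k} ∘ ⋯ ∘ σ^Y_{m+1} ∘ D̂^{m+1}(f)`.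
If there are a functor `E : I × ℕ ⥤ A` and a natural isomorphism `E ⋙ F ≅ D̃`, then
there are a functor `R : I ⥤ A` and a natural isomorphism `R ⋙ F ≅ D`. -/
theorem main_lifting_theorem {A : Type u₃} [Category.{v₃} A]
    [HasColimitsOfShape ℕ A] [HasBinaryProducts B]
    (F : A ⥤ B) [PreservesColimitsOfShape ℕ F] (hproj : Projectable F)
    (D Dh : I ⥤ B) (ε : D ⟶ Dh) (μ : Dh ⟶ D)
    (hretr : ∀ X : I, ε.app X ≫ μ.app X = 𝟙 (D.obj X))
    (Dt : I × ℕ ⥤ B) (hobj : ∀ (X : I) (n : ℕ), Dt.obj (X, n) = powD Dh X n)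
    (hmap : ∀ {X Y : I} (f : X ⟶ Y) (m k : ℕ),
      Dt.map ((f, homOfLE (Nat.le_add_right m k)) : (X, m) ⟶ (Y, m + k)) =
        eqToHom (hobj X m) ≫ powMapD Dh f m ≫ sigmaChainD Dh D ε μ Y m k ≫
          eqToHom (hobj Y (m + k)).symm)
    (E : I × ℕ ⥤ A) (hlift : Nonempty (E ⋙ F ≅ Dt)) :
    ∃ R : I ⥤ A, Nonempty (R ⋙ F ≅ D) := by
  obtain ⟨φ⟩ := hlift
  obtain ⟨S, u, hu⟩ := exists_succDiagram_of_projectable (τ := fun f => Dh.map f ≫ rhoD Dh D ε μ _)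
    hproj (fun X n => (φ.app (X, n + 1) ≪≫ eqToIso (hobj X (n + 1))).hom ≫ alphaD Dh X (n + 1))
    (fun X n => isProjection_hom_comp_fst _) fun f n => by
      simp only [Iso.trans_hom, Iso.app_hom, eqToIso.hom, assoc]
      rw [← Functor.comp_map, φ.hom.naturality_assoc, map_succ_comp_alphaD hobj hmap]
  exact ⟨S.colim, ⟨S.colimCompIso F hretr u fun f n => by rw [hu, assoc]⟩⟩
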